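/- arXiv:1409.5884 — 2 statements merged into one kernel-verified Lean document; each statement's English description precedes it below -/
import Mathlib

section
/- Let M be a real symmetric p×p matrix, ρ an eigenvalue of M with unit eigenvector e, and Λ ∈ ℝᵖ nonzero with ⟨e, Λ⟩ > 0 and ⟨Λ, MΛ⟩ > ρ|Λ|². Define q(t) = ⟨Λ(t), M Λ(t)⟩ where Λ(t) = (|Λ|/|N(t)|)N(t) and N(t) = (1-t)Λ + t|Λ|e. Then q is differentiable at t = 0 and q'(0) = -2⟨e,Λ⟩(⟨Λ,MΛ⟩ - ρ|Λ|²)/|Λ| < 0. -/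
/-! Rescaling a vector rescales the quadratic form quadratically, so along the path
`q t = ‖Λ‖² ⟪N t, M N t⟫ / ‖N t‖²` (for every `t`, as `‖Λ‖ / 0 = 0`). The quotient rule at `t = 0`,
with `N' = ‖Λ‖ e - Λ` and `⟪e, M Λ⟫ = ρ ⟪e, Λ⟫` by symmetry, gives the formula. -/

open RealInnerProductSpace

section

variable {E : Type*} [NormedAddCommGroup E] [InnerProductSpace ℝ E] {T : E →L[ℝ] E}

lemma inner_smul_map_smul (T : E →L[ℝ] E) (s : ℝ) (x : E) :
    ⟪s • x, T (s • x)⟫ = s ^ 2 * ⟪x, T x⟫ := by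
  rw [map_smul, real_inner_smul_left, real_inner_smul_right]
  ring

lemma HasDerivAt.inner_map_self (hT : (T : E →ₗ[ℝ] E).IsSymmetric) {γ : ℝ → E} {v : E} {t : ℝ}
    (hγ : HasDerivAt γ v t) :
    HasDerivAt (fun s => ⟪γ s, T (γ s)⟫) (2 * ⟪v, T (γ t)⟫) t := by
  refine (hγ.inner ℝ (T.hasFDerivAt.comp_hasDerivAt t hγ)).congr_deriv ?_
  have hsymm := hT (γ t) v
  simp only [ContinuousLinearMap.coe_coe] at hsymm
  rw [Function.comp_apply, ← hsymm, real_inner_comm v]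
  ring

lemma HasDerivAt.inner_map_self_div_norm_smul (hT : (T : E →ₗ[ℝ] E).IsSymmetric) (r : ℝ)
    {γ : ℝ → E} {v : E} {t : ℝ} (hγ : HasDerivAt γ v t) (h0 : γ t ≠ 0) :
    HasDerivAt (fun s => ⟪(r / ‖γ s‖) • γ s, T ((r / ‖γ s‖) • γ s)⟫)
      (r ^ 2 * (2 * ⟪v, T (γ t)⟫ * ‖γ t‖ ^ 2 - ⟪γ t, T (γ t)⟫ * (2 * ⟪γ t, v⟫)) /
        (‖γ t‖ ^ 2) ^ 2) t := by
  have hrescale : (fun s => ⟪(r / ‖γ s‖) • γ s, T ((r / ‖γ s‖) • γ s)⟫)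
      = fun s => r ^ 2 * ⟪γ s, T (γ s)⟫ / ‖γ s‖ ^ 2 := by
    ext s
    rw [inner_smul_map_smul, div_pow]
    ring
  rw [hrescale]
  exact (((hγ.inner_map_self hT).const_mul (r ^ 2)).div hγ.norm_sq (by positivity)).congr_deriv
    (by ring)

lemma hasDerivAt_one_sub_smul_add_mul_smul (x y : E) (c t : ℝ) :
    HasDerivAt (fun s : ℝ => (1 - s) • x + (s * c) • y) (c • y - x) t := by
  refine ((((hasDerivAt_id t).const_sub 1).smul_const x).add
    (((hasDerivAt_id t).mul_const c).smul_const y)).congr_deriv ?_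
  simp only [neg_smul, one_mul, one_smul]
  abel

theorem hasDerivAt_inner_map_self_normalized_segment (hT : (T : E →ₗ[ℝ] E).IsSymmetric)
    {ρ : ℝ} {e Λ : E} (he : T e = ρ • e) (hΛ : Λ ≠ 0) :
    HasDerivAt (fun t : ℝ =>
        ⟪(‖Λ‖ / ‖(1 - t) • Λ + (t * ‖Λ‖) • e‖) • ((1 - t) • Λ + (t * ‖Λ‖) • e),
          T ((‖Λ‖ / ‖(1 - t) • Λ + (t * ‖Λ‖) • e‖) • ((1 - t) • Λ + (t * ‖Λ‖) • e))⟫)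
      (-2 * ⟪e, Λ⟫ * (⟪Λ, T Λ⟫ - ρ * ‖Λ‖ ^ 2) / ‖Λ‖) 0 := by
  have h := (hasDerivAt_one_sub_smul_add_mul_smul Λ e ‖Λ‖ 0).inner_map_self_div_norm_smul hT ‖Λ‖
    (by simpa using hΛ)
  simp only [sub_zero, one_smul, zero_mul, zero_smul, add_zero] at h
  refine h.congr_deriv ?_
  have heT : ⟪e, T Λ⟫ = ρ * ⟪e, Λ⟫ := by
    rw [← ContinuousLinearMap.coe_coe T, ← hT e Λ, ContinuousLinearMap.coe_coe, he,
      real_inner_smul_left]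
  have hr : ‖Λ‖ ≠ 0 := norm_ne_zero_iff.mpr hΛ
  rw [inner_sub_left, inner_sub_right, real_inner_smul_left, real_inner_smul_right, heT,
    real_inner_comm e Λ, real_inner_self_eq_norm_sq]
  field_simp
  ring

end

theorem quadratic_form_path_deriv_general (p : ℕ) (M : Matrix (Fin p) (Fin p) ℝ)
    (hM : M.IsSymm) (ρ : ℝ) (e : EuclideanSpace ℝ (Fin p))
    (he : M.mulVec e = ρ • (e : Fin p → ℝ))
    (Λ : EuclideanSpace ℝ (Fin p)) (hΛ : Λ ≠ 0)
    (hpos : (0:ℝ) < inner ℝ e Λ)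
    (hq : ρ * ‖Λ‖ ^ 2 < (inner ℝ Λ ((WithLp.toLp 2 (M.mulVec Λ) : EuclideanSpace ℝ (Fin p))) : ℝ)) :
    HasDerivAt (fun t : ℝ =>
        (inner ℝ ((‖Λ‖ / ‖((1 - t) • Λ + (t * ‖Λ‖) • e : EuclideanSpace ℝ (Fin p))‖) •
            ((1 - t) • Λ + (t * ‖Λ‖) • e))
          ((WithLp.toLp 2 (M.mulVec ((‖Λ‖ / ‖((1 - t) • Λ + (t * ‖Λ‖) • e : EuclideanSpace ℝ (Fin p))‖) •
            ((1 - t) • Λ + (t * ‖Λ‖) • e))) : EuclideanSpace ℝ (Fin p))) : ℝ))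
      (-2 * (inner ℝ e Λ : ℝ) *
        ((inner ℝ Λ ((WithLp.toLp 2 (M.mulVec Λ) : EuclideanSpace ℝ (Fin p))) : ℝ) - ρ * ‖Λ‖ ^ 2) / ‖Λ‖) 0 ∧
    -2 * (inner ℝ e Λ : ℝ) *
        ((inner ℝ Λ ((WithLp.toLp 2 (M.mulVec Λ) : EuclideanSpace ℝ (Fin p))) : ℝ) - ρ * ‖Λ‖ ^ 2) / ‖Λ‖ < 0 := by
  have hT : ((Matrix.toEuclideanCLM (𝕜 := ℝ) M : EuclideanSpace ℝ (Fin p) →L[ℝ] _) :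
      EuclideanSpace ℝ (Fin p) →ₗ[ℝ] _).IsSymmetric :=
    Matrix.isSymmetric_toEuclideanLin_iff.mpr (Matrix.isHermitian_iff_isSymm.mpr hM)
  have heig : Matrix.toEuclideanCLM (𝕜 := ℝ) M e = ρ • e := congrArg (WithLp.toLp 2) he
  refine ⟨hasDerivAt_inner_map_self_normalized_segment hT heig hΛ, ?_⟩
  exact div_neg_of_neg_of_pos
    (mul_neg_of_neg_of_pos (mul_neg_of_neg_of_pos (by norm_num) hpos) (sub_pos.mpr hq))
    (norm_pos_iff.mpr hΛ)

theorem quadratic_form_path_deriv (p : ℕ) (M : Matrix (Fin p) (Fin p) ℝ)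
    (hM : M.IsSymm) (ρ : ℝ) (e : EuclideanSpace ℝ (Fin p))
    (he : M.mulVec e = ρ • (e : Fin p → ℝ)) (hne : ‖e‖ = 1)
    (Λ : EuclideanSpace ℝ (Fin p)) (hΛ : Λ ≠ 0)
    (hpos : (0:ℝ) < inner ℝ e Λ)
    (hq : ρ * ‖Λ‖ ^ 2 < (inner ℝ Λ ((WithLp.toLp 2 (M.mulVec Λ) : EuclideanSpace ℝ (Fin p))) : ℝ)) :
    HasDerivAt (fun t : ℝ =>
        (inner ℝ ((‖Λ‖ / ‖((1 - t) • Λ + (t * ‖Λ‖) • e : EuclideanSpace ℝ (Fin p))‖) •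
            ((1 - t) • Λ + (t * ‖Λ‖) • e))
          ((WithLp.toLp 2 (M.mulVec ((‖Λ‖ / ‖((1 - t) • Λ + (t * ‖Λ‖) • e : EuclideanSpace ℝ (Fin p))‖) •
            ((1 - t) • Λ + (t * ‖Λ‖) • e))) : EuclideanSpace ℝ (Fin p))) : ℝ))
      (-2 * (inner ℝ e Λ : ℝ) *
        ((inner ℝ Λ ((WithLp.toLp 2 (M.mulVec Λ) : EuclideanSpace ℝ (Fin p))) : ℝ) - ρ * ‖Λ‖ ^ 2) / ‖Λ‖) 0 ∧
    -2 * (inner ℝ e Λ : ℝ) *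
        ((inner ℝ Λ ((WithLp.toLp 2 (M.mulVec Λ) : EuclideanSpace ℝ (Fin p))) : ℝ) - ρ * ‖Λ‖ ^ 2) / ‖Λ‖ < 0 :=
  quadratic_form_path_deriv_general p M hM ρ e he Λ hΛ hpos hq
end

section
/- Let n ≥ 2, 1 < β < n + 1, and 1 ≤ k ≤ n. Then as T → +∞, T^(1-β) · ∫_{ℝⁿ} |x_k + T|^β · x_k / (1+|x|²)^(n+1) dx converges to β · ∫_{ℝⁿ} x_k² / (1+|x|²)^(n+1) dx, which is a positive constant. -/
open MeasureTheory Filter Topology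

/-!
The weight `x ↦ x k / (1 + ‖x‖ ^ 2) ^ (n + 1)` is odd, so its integral vanishes and
`|x k + T| ^ β` may be replaced by `|x k + T| ^ β - T ^ β`. Multiplied by `T ^ (1 - β)`, this
difference tends to `β * x k` (the derivative of `t ^ β` at `1`), and by the mean value theorem it
is bounded by `β * (1 + |x k|) ^ (β - 1) * |x k|` uniformly in `T ≥ 1`. The resulting majorant is
`≲ (1 + ‖x‖ ^ 2) ^ ((β + 1) / 2 - (n + 1))`, which is integrable on `ℝⁿ` exactly when `β < n + 1`,
so dominated convergence applies.
-/

lemma Function.Odd.integral_eq_zero {G E : Type*} [MeasurableSpace G] [AddGroup G]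
    [MeasurableNeg G] [NormedAddCommGroup E] [NormedSpace ℝ E] {μ : Measure G}
    [μ.IsNegInvariant] {f : G → E} (hf : f.Odd) : ∫ x, f x ∂μ = 0 := by
  have h := integral_neg_eq_self f μ
  simp only [hf _, integral_neg] at h
  have h2 : (2 : ℝ) • ∫ x, f x ∂μ = 0 := by
    rw [two_smul]
    nth_rewrite 1 [← h]
    exact neg_add_cancel _
  exact (smul_eq_zero.mp h2).resolve_left two_ne_zero

lemma abs_rpow_sub_rpow_le {β M x y : ℝ} (hβ : 1 ≤ β) (hx : 0 ≤ x) (hy : 0 ≤ y)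
    (hxM : x ≤ M) (hyM : y ≤ M) : |x ^ β - y ^ β| ≤ β * M ^ (β - 1) * |x - y| := by
  have hderiv : ∀ t ∈ Set.Icc 0 M,
      HasDerivWithinAt (fun t : ℝ => t ^ β) (β * t ^ (β - 1)) (Set.Icc 0 M) t :=
    fun t _ => (Real.hasDerivAt_rpow_const (Or.inr hβ)).hasDerivWithinAt
  have hderiv_le : ∀ t ∈ Set.Icc 0 M, ‖β * t ^ (β - 1)‖ ≤ β * M ^ (β - 1) := by
    rintro t ⟨ht0, htM⟩
    rw [Real.norm_of_nonneg (by positivity)]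
    gcongr
  exact (convex_Icc 0 M).norm_image_sub_le_of_norm_hasDerivWithin_le hderiv hderiv_le
    ⟨hy, hyM⟩ ⟨hx, hxM⟩

lemma abs_rpow_mul_abs_add_rpow_sub_rpow_le {β : ℝ} (hβ : 1 ≤ β) (a : ℝ) {T : ℝ} (hT : 1 ≤ T) :
    |T ^ (1 - β) * (|a + T| ^ β - T ^ β)| ≤ β * (1 + |a|) ^ (β - 1) * |a| := by
  have hT0 : 0 < T := by linarith
  have hshift : |(|a + T|) - T| ≤ |a| := by
    simpa [abs_of_pos hT0] using abs_abs_sub_abs_le_abs_sub (a + T) T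
  have hmvt : |(|a + T|) ^ β - T ^ β| ≤ β * (T + |a|) ^ (β - 1) * |a| := by
    refine (abs_rpow_sub_rpow_le (M := T + |a|) hβ (abs_nonneg _) hT0.le ?_ ?_).trans ?_
    · exact (abs_add_le a T).trans (by rw [abs_of_pos hT0, add_comm])
    · linarith [abs_nonneg a]
    · gcongr
  have hscale : T ^ (1 - β) * (T + |a|) ^ (β - 1) ≤ (1 + |a|) ^ (β - 1) := by
    rw [show 1 - β = -(β - 1) by ring, Real.rpow_neg hT0.le, ← div_eq_inv_mul,
      ← Real.div_rpow (by positivity) hT0.le]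
    gcongr
    rw [add_div, div_self hT0.ne']
    gcongr
    exact div_le_self (abs_nonneg a) hT
  calc |T ^ (1 - β) * (|a + T| ^ β - T ^ β)|
      = T ^ (1 - β) * |(|a + T|) ^ β - T ^ β| := by
        rw [abs_mul, abs_of_nonneg (by positivity)]
    _ ≤ T ^ (1 - β) * (β * (T + |a|) ^ (β - 1) * |a|) := by gcongr
    _ = β * (T ^ (1 - β) * (T + |a|) ^ (β - 1)) * |a| := by ring
    _ ≤ β * (1 + |a|) ^ (β - 1) * |a| := by gcongr

lemma tendsto_rpow_mul_abs_add_rpow_sub_rpow (β a : ℝ) :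
    Tendsto (fun T : ℝ => T ^ (1 - β) * (|a + T| ^ β - T ^ β)) atTop (𝓝 (β * a)) := by
  rcases eq_or_ne a 0 with rfl | ha
  · refine tendsto_const_nhds.congr' ?_
    filter_upwards [eventually_ge_atTop 0] with T hT
    simp [abs_of_nonneg hT]
  have hslope : Tendsto (fun u : ℝ => u⁻¹ * ((1 + u) ^ β - 1)) (𝓝[≠] 0) (𝓝 β) := by
    simpa using hasDerivAt_iff_tendsto_slope_zero.mp
      (Real.hasDerivAt_rpow_const (x := 1) (p := β) (Or.inl one_ne_zero))
  have hdiv : Tendsto (fun T : ℝ => a / T) atTop (𝓝[≠] 0) :=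
    tendsto_nhdsWithin_of_tendsto_nhds_of_eventually_within _
      (tendsto_const_nhds.div_atTop tendsto_id)
      (eventually_gt_atTop 0 |>.mono fun T hT => div_ne_zero ha hT.ne')
  rw [mul_comm β a]
  refine ((hslope.comp hdiv).const_mul a).congr' ?_
  filter_upwards [eventually_gt_atTop |a|] with T hT
  have hT0 : 0 < T := (abs_nonneg a).trans_lt hT
  have hpos : 0 < 1 + a / T := by
    rw [one_add_div hT0.ne']
    exact div_pos (by linarith [neg_abs_le a]) hT0
  have hshift : |a + T| = T * (1 + a / T) := by
    rw [abs_of_pos (by linarith [neg_abs_le a])]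
    field_simp
    ring
  have hTT : T ^ (1 - β) * T ^ β = T := by
    rw [← Real.rpow_add hT0]
    simp
  calc a * ((a / T)⁻¹ * ((1 + a / T) ^ β - 1)) = T * ((1 + a / T) ^ β - 1) := by
        field_simp
    _ = T ^ (1 - β) * T ^ β * ((1 + a / T) ^ β - 1) := by rw [hTT]
    _ = T ^ (1 - β) * (|a + T| ^ β - T ^ β) := by
        rw [hshift, Real.mul_rpow hT0.le hpos.le]
        ring

lemma one_add_abs_rpow_le {p : ℝ} (hp : 0 ≤ p) (a : ℝ) :
    (1 + |a|) ^ p ≤ 2 ^ (p / 2) * (1 + a ^ 2) ^ (p / 2) := by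
  have hsq : (1 + |a|) ^ (2 : ℝ) ≤ 2 * (1 + a ^ 2) := by
    rw [Real.rpow_two]
    nlinarith [sq_abs a, sq_nonneg (1 - |a|)]
  calc (1 + |a|) ^ p = ((1 + |a|) ^ (2 : ℝ)) ^ (p / 2) := by
        rw [← Real.rpow_mul (by positivity)]
        ring_nf
    _ ≤ (2 * (1 + a ^ 2)) ^ (p / 2) := by gcongr
    _ = 2 ^ (p / 2) * (1 + a ^ 2) ^ (p / 2) := Real.mul_rpow (by norm_num) (by positivity)

lemma abs_rpow_mul_abs_add_rpow_sub_rpow_mul_le {β : ℝ} (hβ : 1 ≤ β) (a : ℝ) {T : ℝ}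
    (hT : 1 ≤ T) :
    |T ^ (1 - β) * (|a + T| ^ β - T ^ β) * a| ≤
      β * 2 ^ ((β + 1) / 2) * (1 + a ^ 2) ^ ((β + 1) / 2) := by
  calc |T ^ (1 - β) * (|a + T| ^ β - T ^ β) * a|
      ≤ β * (1 + |a|) ^ (β - 1) * |a| * |a| := by
        rw [abs_mul]
        gcongr
        exact abs_rpow_mul_abs_add_rpow_sub_rpow_le hβ a hT
    _ ≤ β * ((1 + |a|) ^ (β - 1) * (1 + |a|) ^ (2 : ℝ)) := by
        rw [Real.rpow_two, mul_assoc, mul_assoc, sq]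
        gcongr <;> linarith [abs_nonneg a]
    _ = β * (1 + |a|) ^ (β + 1) := by
        rw [← Real.rpow_add (by positivity)]
        ring_nf
    _ ≤ β * (2 ^ ((β + 1) / 2) * (1 + a ^ 2) ^ ((β + 1) / 2)) := by
        gcongr
        exact one_add_abs_rpow_le (by linarith) a
    _ = β * 2 ^ ((β + 1) / 2) * (1 + a ^ 2) ^ ((β + 1) / 2) := by ring

section

variable {n : ℕ}

lemma abs_div_one_add_norm_sq_pow_le {g : ℝ → ℝ} {C s : ℝ} (hs : 0 ≤ s)
    (hg : ∀ a, |g a| ≤ C * (1 + a ^ 2) ^ (s / 2)) (m : ℕ) (k : Fin n)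
    (x : EuclideanSpace ℝ (Fin n)) :
    |g (x k) / (1 + ‖x‖ ^ 2) ^ m| ≤ C * (1 + ‖x‖ ^ 2) ^ (-(2 * m - s) / 2) := by
  have hC : 0 ≤ C := by simpa using (abs_nonneg _).trans (hg 0)
  have hw : 0 < 1 + ‖x‖ ^ 2 := by positivity
  have hcoord : (x k) ^ 2 ≤ ‖x‖ ^ 2 := by
    rw [← sq_abs, ← Real.norm_eq_abs]
    gcongr
    exact PiLp.norm_apply_le x k
  calc |g (x k) / (1 + ‖x‖ ^ 2) ^ m| = |g (x k)| / (1 + ‖x‖ ^ 2) ^ m := by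
        rw [abs_div, abs_of_pos (pow_pos hw m)]
    _ ≤ C * (1 + ‖x‖ ^ 2) ^ (s / 2) / (1 + ‖x‖ ^ 2) ^ (m : ℝ) := by
        rw [Real.rpow_natCast]
        gcongr
        exact (hg _).trans (by gcongr)
    _ = C * (1 + ‖x‖ ^ 2) ^ (-(2 * m - s) / 2) := by
        rw [mul_div_assoc, ← Real.rpow_sub hw]
        ring_nf

lemma integrable_comp_apply_div_one_add_norm_sq_pow {g : ℝ → ℝ} (hgm : Measurable g)
    {C s : ℝ} (hs : 0 ≤ s) (hg : ∀ a, |g a| ≤ C * (1 + a ^ 2) ^ (s / 2)) {m : ℕ}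
    (hsm : n + s < 2 * m) (k : Fin n) :
    Integrable (fun x : EuclideanSpace ℝ (Fin n) => g (x k) / (1 + ‖x‖ ^ 2) ^ m) := by
  refine ((integrable_rpow_neg_one_add_norm_sq (r := 2 * m - s) ?_).const_mul C).mono'
    ?_ (ae_of_all _ fun x => abs_div_one_add_norm_sq_pow_le hs hg m k x)
  · rw [finrank_euclideanSpace_fin]
    linarith
  · exact Measurable.aestronglyMeasurable (by fun_prop)

lemma integral_apply_div_one_add_norm_sq_pow_eq_zero (m : ℕ) (k : Fin n) :
    ∫ x : EuclideanSpace ℝ (Fin n), x k / (1 + ‖x‖ ^ 2) ^ m = 0 :=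
  Function.Odd.integral_eq_zero fun x => by simp [neg_div]

lemma integral_apply_sq_div_one_add_norm_sq_pow_pos {m : ℕ} (hm : n + 2 < 2 * m) (k : Fin n) :
    0 < ∫ x : EuclideanSpace ℝ (Fin n), (x k) ^ 2 / (1 + ‖x‖ ^ 2) ^ m := by
  have hsq_le (a : ℝ) : |a ^ 2| ≤ 1 * (1 + a ^ 2) ^ ((2 : ℝ) / 2) := by
    rw [div_self two_ne_zero, Real.rpow_one, one_mul, abs_sq]
    linarith
  exact integral_pos_of_integrable_nonneg_nonzero (x := EuclideanSpace.single k 1)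
    (.div (by fun_prop) (by fun_prop) fun x => by positivity)
    (integrable_comp_apply_div_one_add_norm_sq_pow (by fun_prop) zero_le_two hsq_le
      (by exact_mod_cast hm) k) (fun x => by positivity) (by simp)

lemma rpow_one_sub_mul_integral_abs_add_rpow_eq {β : ℝ} (hβ : 1 ≤ β) (hβn : β < n + 1)
    (k : Fin n) {T : ℝ} (hT : 1 ≤ T) :
    T ^ (1 - β) * ∫ x : EuclideanSpace ℝ (Fin n),
        |x k + T| ^ β * x k / (1 + ‖x‖ ^ 2) ^ (n + 1) =
      ∫ x : EuclideanSpace ℝ (Fin n),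
        T ^ (1 - β) * (|x k + T| ^ β - T ^ β) * x k / (1 + ‖x‖ ^ 2) ^ (n + 1) := by
  have hTT : T ^ (1 - β) * T ^ β = T := by
    rw [← Real.rpow_add (by linarith)]
    simp
  have hid_le (a : ℝ) : |a| ≤ 1 * (1 + a ^ 2) ^ ((2 : ℝ) / 2) := by
    rw [div_self two_ne_zero, Real.rpow_one, one_mul]
    nlinarith [abs_nonneg a, sq_abs a]
  have hn1 : (1 : ℝ) ≤ n := by exact_mod_cast k.pos
  rw [← integral_const_mul]
  calc ∫ x : EuclideanSpace ℝ (Fin n),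
        T ^ (1 - β) * (|x k + T| ^ β * x k / (1 + ‖x‖ ^ 2) ^ (n + 1))
      = ∫ x : EuclideanSpace ℝ (Fin n),
          T ^ (1 - β) * (|x k + T| ^ β - T ^ β) * x k / (1 + ‖x‖ ^ 2) ^ (n + 1) +
            T * (x k / (1 + ‖x‖ ^ 2) ^ (n + 1)) := by
        congr 1 with x
        linear_combination (x k / (1 + ‖x‖ ^ 2) ^ (n + 1)) * hTT
    _ = _ := by
        rw [integral_add, integral_const_mul, integral_apply_div_one_add_norm_sq_pow_eq_zero,
          mul_zero, add_zero]
        · exact integrable_comp_apply_div_one_add_norm_sq_pow (by fun_prop) (by linarith)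
            (fun a => abs_rpow_mul_abs_add_rpow_sub_rpow_mul_le hβ a hT)
            (by push_cast; linarith) k
        · exact (integrable_comp_apply_div_one_add_norm_sq_pow measurable_id zero_le_two
            hid_le (by push_cast; linarith) k).const_mul T

lemma tendsto_integral_rpow_one_sub_mul_abs_add_rpow_sub_rpow {β : ℝ} (hβ : 1 ≤ β)
    (hβn : β < n + 1) (k : Fin n) :
    Tendsto (fun T : ℝ => ∫ x : EuclideanSpace ℝ (Fin n),
        T ^ (1 - β) * (|x k + T| ^ β - T ^ β) * x k / (1 + ‖x‖ ^ 2) ^ (n + 1)) atTop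
      (𝓝 (β * ∫ x : EuclideanSpace ℝ (Fin n), (x k) ^ 2 / (1 + ‖x‖ ^ 2) ^ (n + 1))) := by
  rw [← integral_const_mul]
  refine tendsto_integral_filter_of_dominated_convergence _
    (Eventually.of_forall fun T => Measurable.aestronglyMeasurable (by fun_prop)) ?_
    ((integrable_rpow_neg_one_add_norm_sq (r := 2 * (n + 1 : ℕ) - (β + 1)) ?_).const_mul
      (β * 2 ^ ((β + 1) / 2))) (ae_of_all _ fun x => ?_)
  · filter_upwards [eventually_ge_atTop 1] with T hT
    exact ae_of_all _ fun x => abs_div_one_add_norm_sq_pow_le (by linarith)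
      (fun a => abs_rpow_mul_abs_add_rpow_sub_rpow_mul_le hβ a hT) (n + 1) k x
  · rw [finrank_euclideanSpace_fin]
    push_cast
    linarith
  · convert (tendsto_rpow_mul_abs_add_rpow_sub_rpow β (x k)).mul_const
      (x k / (1 + ‖x‖ ^ 2) ^ (n + 1)) using 1
    · ext T
      ring
    · congr 1
      ring

end

theorem shifted_integral_asymptotic_general (n : ℕ) (β : ℝ) (hβ : 1 < β)
    (hβn : β < (n : ℝ) + 1) (k : Fin n) :
    Tendsto (fun T : ℝ => T ^ (1 - β) *
        ∫ x : EuclideanSpace ℝ (Fin n),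
          |x k + T| ^ β * x k / (1 + ‖x‖ ^ 2) ^ (n + 1))
      atTop
      (𝓝 (β * ∫ x : EuclideanSpace ℝ (Fin n),
          (x k) ^ 2 / (1 + ‖x‖ ^ 2) ^ (n + 1))) ∧
    0 < β * ∫ x : EuclideanSpace ℝ (Fin n),
        (x k) ^ 2 / (1 + ‖x‖ ^ 2) ^ (n + 1) := by
  refine ⟨(tendsto_integral_rpow_one_sub_mul_abs_add_rpow_sub_rpow hβ.le hβn k).congr' ?_,
    mul_pos (by linarith) (integral_apply_sq_div_one_add_norm_sq_pow_pos ?_ k)⟩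
  · filter_upwards [eventually_ge_atTop 1] with T hT
    exact (rpow_one_sub_mul_integral_abs_add_rpow_eq hβ.le hβn k hT).symm
  · have := k.pos
    omega

theorem shifted_integral_asymptotic (n : ℕ) (hn : 2 ≤ n) (β : ℝ) (hβ : 1 < β)
    (hβn : β < (n : ℝ) + 1) (k : Fin n) :
    Tendsto (fun T : ℝ => T ^ (1 - β) *
        ∫ x : EuclideanSpace ℝ (Fin n),
          |x k + T| ^ β * x k / (1 + ‖x‖ ^ 2) ^ (n + 1))
      atTop
      (𝓝 (β * ∫ x : EuclideanSpace ℝ (Fin n),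
          (x k) ^ 2 / (1 + ‖x‖ ^ 2) ^ (n + 1))) ∧
    0 < β * ∫ x : EuclideanSpace ℝ (Fin n),
        (x k) ^ 2 / (1 + ‖x‖ ^ 2) ^ (n + 1) :=
  shifted_integral_asymptotic_general n β hβ hβn k
end
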